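/- arXiv:math/9504229 — 6 statements merged into one kernel-verified Lean document; each statement's English description precedes it below -/
import Mathlib

section
/- With a_k = {x^{:k}} and b_k = ⌊x^{:k}⌋, for every real x: x^3 = a_1^3 + 3a_1·a_2 + 3a_3 + b_1^3 - 3b_1·b_2 + 3b_3. -/
/-- Iterated floor product: `x^{:0} = 1`, `x^{:k} = x * ⌊x^{:(k-1)}⌋`. -/
noncomputable def iterFloorPow (x : ℝ) : ℕ → ℝ
  | 0 => 1
  | k + 1 => x * ⌊iterFloorPow x k⌋

/-- `a_k = {x^{:k}}`. -/
noncomputable def aSeq (x : ℝ) (k : ℕ) : ℝ := Int.fract (iterFloorPow x k)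

/-- `b_k = ⌊x^{:k}⌋` regarded as a real number. -/
noncomputable def bSeq (x : ℝ) (k : ℕ) : ℝ := (⌊iterFloorPow x k⌋ : ℝ)

theorem cube_eq (x : ℝ) :
    x ^ 3 = aSeq x 1 ^ 3 + 3 * aSeq x 1 * aSeq x 2 + 3 * aSeq x 3
      + bSeq x 1 ^ 3 - 3 * bSeq x 1 * bSeq x 2 + 3 * bSeq x 3 := by
  have h1 : iterFloorPow x 1 = x := by
    simp [iterFloorPow]
  simp only [aSeq, bSeq, Int.fract, h1, iterFloorPow]
  ring
end

section
/- With a_k = {x^{:k}} and b_k = ⌊x^{:k}⌋, for every real x: x^4 = a_1^4 + 4a_1^2·a_2 + 4a_1·a_3 + 2a_2^2 + 4a_4 - b_1^4 + 4b_1^2·b_2 - 4b_1·b_3 - 2b_2^2 + 4b_4. -/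
theorem fourth_eq (x : ℝ) :
    x ^ 4 = aSeq x 1 ^ 4 + 4 * aSeq x 1 ^ 2 * aSeq x 2 + 4 * aSeq x 1 * aSeq x 3
      + 2 * aSeq x 2 ^ 2 + 4 * aSeq x 4
      - bSeq x 1 ^ 4 + 4 * bSeq x 1 ^ 2 * bSeq x 2 - 4 * bSeq x 1 * bSeq x 3
      - 2 * bSeq x 2 ^ 2 + 4 * bSeq x 4 := by
  have hfract : ∀ k, aSeq x k = iterFloorPow x k - bSeq x k := by
    intro k; simp only [aSeq, bSeq, Int.fract]
  have hstep : ∀ k, iterFloorPow x (k + 1) = x * bSeq x k := fun k => rfl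
  have h1 : iterFloorPow x 1 = x := by
    rw [hstep 0]; simp only [bSeq, iterFloorPow, Int.floor_one, Int.cast_one, mul_one]
  have ha1 : aSeq x 1 = x - bSeq x 1 := by rw [hfract, h1]
  have ha2 : aSeq x 2 = x * bSeq x 1 - bSeq x 2 := by rw [hfract, hstep 1]
  have ha3 : aSeq x 3 = x * bSeq x 2 - bSeq x 3 := by rw [hfract, hstep 2]
  have ha4 : aSeq x 4 = x * bSeq x 3 - bSeq x 4 := by rw [hfract, hstep 3]
  rw [ha1, ha2, ha3, ha4]; ring
end

section
/- With a_k = {x^{:k}} and b_k = ⌊x^{:k}⌋, for every real x: x^3 = a_1^3 + 2a_1·a_2 + a_3 + (a_1^2 + a_2)·b_1 + a_1·b_2 + b_3. -/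
theorem cube_eq_mixed (x : ℝ) :
    x ^ 3 = aSeq x 1 ^ 3 + 2 * aSeq x 1 * aSeq x 2 + aSeq x 3
      + (aSeq x 1 ^ 2 + aSeq x 2) * bSeq x 1 + aSeq x 1 * bSeq x 2 + bSeq x 3 := by
  have key : ∀ k, aSeq x k + bSeq x k = iterFloorPow x k := fun k =>
    Int.fract_add_floor (iterFloorPow x k)
  have e1 : iterFloorPow x 1 = x := by simp [iterFloorPow]
  have e2 : iterFloorPow x 2 = x * bSeq x 1 := rfl
  have e3 : iterFloorPow x 3 = x * bSeq x 2 := rfl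
  have h1 : aSeq x 1 + bSeq x 1 = x := by rw [key, e1]
  have h2 : aSeq x 2 + bSeq x 2 = x * bSeq x 1 := by rw [key, e2]
  have h3 : aSeq x 3 + bSeq x 3 = x * bSeq x 2 := by rw [key, e3]
  linear_combination (-(aSeq x 1 ^ 2 + aSeq x 2 + aSeq x 1 * x + x ^ 2)) * h1 + (-(aSeq x 1 + x)) * h2 + (-1) * h3
end

section
/- With a_k = {x^{:k}} and b_k = ⌊x^{:k}⌋, for every real x: x^4 = a_1^4 + 3a_1^2·a_2 + 2a_1·a_3 + a_2^2 + a_4 + (a_1^3 + 2a_1·a_2 + a_3)·b_1 + (a_1^2 + a_2)·b_2 + a_1·b_3 + b_4. -/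
lemma key (x : ℝ) (k : ℕ) : aSeq x (k + 1) + bSeq x (k + 1) = x * bSeq x k := by
  show Int.fract (iterFloorPow x (k+1)) + _ = _
  rw [Int.fract]
  simp only [iterFloorPow, bSeq]
  ring

lemma b0 (x : ℝ) : bSeq x 0 = 1 := by simp [bSeq, iterFloorPow]

theorem fourth_eq_mixed (x : ℝ) :
    x ^ 4 = aSeq x 1 ^ 4 + 3 * aSeq x 1 ^ 2 * aSeq x 2 + 2 * aSeq x 1 * aSeq x 3
      + aSeq x 2 ^ 2 + aSeq x 4
      + (aSeq x 1 ^ 3 + 2 * aSeq x 1 * aSeq x 2 + aSeq x 3) * bSeq x 1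
      + (aSeq x 1 ^ 2 + aSeq x 2) * bSeq x 2 + aSeq x 1 * bSeq x 3 + bSeq x 4 := by
  have h1 := key x 0
  have h2 := key x 1
  have h3 := key x 2
  have h4 := key x 3
  rw [b0] at h1
  set a1 := aSeq x 1
  set a2 := aSeq x 2
  set a3 := aSeq x 3
  linear_combination (x^3 + a1*x^2 + (a1^2+a2)*x + a1^3 + 2*a1*a2 + a3) * h1.symm
    + (x^2 + a1*x + a1^2 + a2) * h2.symm + (x + a1) * h3.symm + h4.symm
end

section
/- Let X be a random variable on [0,1) with a density function f that is monotone (nonincreasing or nondecreasing) and not almost everywhere constant. Then E(e^{2πiX}) ≠ 0. -/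
/-!
Since `sin (2π(x + 1/2)) = -sin (2πx)`, the imaginary part of `E(e^{2πiX})` is
`∫₀^{1/2} sin (2πx) (f x - f (x + 1/2)) dx`. For antitone `f` the integrand is nonnegative, so if
the integral vanishes then `f x = f (x + 1/2)` for a.e. `x ∈ (0, 1/2)`; squeezing by monotonicity,
`f` is constant on `(0, 1)`, and the constant is `1` because `f` is a density. The nondecreasing
case follows by applying this to `-f`.
-/

open MeasureTheory Real Set

theorem intervalIntegral.integral_add_comp_add_right {E : Type*} [NormedAddCommGroup E]
    [NormedSpace ℝ E] {g : ℝ → E} {a p : ℝ} (h₁ : IntervalIntegrable g volume a (a + p))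
    (h₂ : IntervalIntegrable g volume (a + p) (a + p + p)) :
    ∫ x in a..a + p, (g x + g (x + p)) = ∫ x in a..a + p + p, g x := by
  have h₂' : IntervalIntegrable (fun x => g (x + p)) volume a (a + p) := by
    simpa using h₂.comp_add_right p
  rw [intervalIntegral.integral_add h₁ h₂', intervalIntegral.integral_comp_add_right,
    intervalIntegral.integral_add_adjacent_intervals h₁ h₂]

theorem integral_sin_two_pi_mul_eq_integral_half {f : ℝ → ℝ} (hf : IntervalIntegrable f volume 0 1) :
    ∫ x in (0 : ℝ)..1, sin (2 * π * x) * f x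
      = ∫ x in (0 : ℝ)..1 / 2, sin (2 * π * x) * (f x - f (x + 1 / 2)) := by
  have hg : IntervalIntegrable (fun x => sin (2 * π * x) * f x) volume 0 1 :=
    hf.continuousOn_mul (by fun_prop)
  have h := intervalIntegral.integral_add_comp_add_right (a := 0) (p := 1 / 2)
    (hg.mono_set (uIcc_subset_uIcc (by norm_num [mem_uIcc]) (by norm_num [mem_uIcc])))
    (hg.mono_set (uIcc_subset_uIcc (by norm_num [mem_uIcc]) (by norm_num [mem_uIcc])))
  norm_num at h
  rw [← h]
  refine intervalIntegral.integral_congr fun x _ => ?_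
  rw [show 2 * π * (x + 1 / 2) = 2 * π * x + π by ring, sin_add_pi]
  ring

theorem AntitoneOn.eqOn_of_ae_eq_comp_add {f : ℝ → ℝ} {a p : ℝ}
    (hf : AntitoneOn f (Ioo a (a + 2 * p)))
    (h : ∀ᵐ x ∂volume.restrict (Ioo a (a + p)), f x = f (x + p)) :
    EqOn f (fun _ => f (a + p)) (Ioo a (a + 2 * p)) := by
  rintro y ⟨hay, hya⟩
  -- Pick `x` with `f x = f (x + p)` and `x < y, a + p < x + p`: antitonicity squeezes `f y` and
  -- `f (a + p)` between `f x` and `f (x + p)`.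
  obtain ⟨x, ⟨hx_lo, hx_hi⟩, hfx⟩ := Measure.exists_mem_of_measure_ne_zero_of_ae
    (s := Ioo (max a (y - p)) (min (a + p) y))
    (by
      simp only [Real.volume_Ioo, ne_eq, ENNReal.ofReal_eq_zero, not_le, sub_pos, max_lt_iff,
        lt_min_iff]
      refine ⟨⟨?_, ?_⟩, ?_, ?_⟩ <;> linarith)
    (ae_restrict_of_ae_restrict_of_subset (Ioo_subset_Ioo (le_max_left _ _) (min_le_left _ _)) h)
  rw [max_lt_iff] at hx_lo
  rw [lt_min_iff] at hx_hi
  have mem : ∀ z, x ≤ z → z ≤ x + p → z ∈ Ioo a (a + 2 * p) := fun z h₁ h₂ =>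
    ⟨by linarith, by linarith⟩
  have h₁ := hf (mem x le_rfl (by linarith)) (mem y (by linarith) (by linarith)) (by linarith)
  have h₂ := hf (mem y (by linarith) (by linarith)) (mem (x + p) (by linarith) le_rfl) (by linarith)
  have h₃ := hf (mem x le_rfl (by linarith)) (mem (a + p) (by linarith) (by linarith)) (by linarith)
  have h₄ := hf (mem (a + p) (by linarith) (by linarith)) (mem (x + p) (by linarith) le_rfl)
    (by linarith)
  show f y = f (a + p)
  linarith

theorem AntitoneOn.ae_eq_comp_add_half_of_integral_sin_mul_eq_zero {f : ℝ → ℝ}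
    (hf : AntitoneOn f (Ioo 0 1)) (hint : IntervalIntegrable f volume 0 1)
    (h0 : ∫ x in (0 : ℝ)..1, sin (2 * π * x) * f x = 0) :
    ∀ᵐ x ∂volume.restrict (Ioo 0 (1 / 2)), f x = f (x + 1 / 2) := by
  set g : ℝ → ℝ := fun x => sin (2 * π * x) * (f x - f (x + 1 / 2))
  have hg_int : IntegrableOn g (Ioo 0 (1 / 2)) := by
    have h₁ : IntervalIntegrable f volume 0 (1 / 2) :=
      hint.mono_set (uIcc_subset_uIcc (by norm_num [mem_uIcc]) (by norm_num [mem_uIcc]))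
    have h₂ : IntervalIntegrable f volume (1 / 2) 1 :=
      hint.mono_set (uIcc_subset_uIcc (by norm_num [mem_uIcc]) (by norm_num [mem_uIcc]))
    have h₂' : IntervalIntegrable (fun x => f (x + 1 / 2)) volume 0 (1 / 2) := by
      convert h₂.comp_add_right (1 / 2) using 1 <;> norm_num
    exact (intervalIntegrable_iff_integrableOn_Ioo_of_le (by norm_num)).1
      ((h₁.sub h₂').continuousOn_mul (by fun_prop))
  have hg_nonneg : ∀ x ∈ Ioo (0 : ℝ) (1 / 2), 0 ≤ g x := fun x ⟨hx₀, hx₁⟩ =>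
    mul_nonneg (sin_nonneg_of_nonneg_of_le_pi (by positivity) (by nlinarith [pi_pos]))
      (sub_nonneg.2 (hf ⟨hx₀, by linarith⟩ ⟨by linarith, by linarith⟩ (by linarith)))
  rw [integral_sin_two_pi_mul_eq_integral_half hint, intervalIntegral.integral_of_le (by norm_num),
    integral_Ioc_eq_integral_Ioo,
    setIntegral_eq_zero_iff_of_nonneg_ae (ae_restrict_of_forall_mem measurableSet_Ioo hg_nonneg)
      hg_int] at h0
  filter_upwards [h0, ae_restrict_mem measurableSet_Ioo] with x hgx ⟨hx₀, hx₁⟩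
  have hsin : sin (2 * π * x) ≠ 0 :=
    (sin_pos_of_pos_of_lt_pi (by positivity) (by nlinarith [pi_pos])).ne'
  exact sub_eq_zero.1 ((mul_eq_zero.1 hgx).resolve_left hsin)

theorem AntitoneOn.ae_eq_const_of_integral_sin_mul_eq_zero {f : ℝ → ℝ}
    (hf : AntitoneOn f (Ioo 0 1)) (hint : IntegrableOn f (Ico 0 1))
    (h0 : ∫ t in Ico 0 1, sin (2 * π * t) * f t = 0) :
    f =ᵐ[volume.restrict (Ico 0 1)] fun _ => f (1 / 2) := by
  have hint' : IntervalIntegrable f volume 0 1 :=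
    (intervalIntegrable_iff_integrableOn_Ico_of_le zero_le_one).2 hint
  rw [integral_Ico_eq_integral_Ioo, ← integral_Ioc_eq_integral_Ioo,
    ← intervalIntegral.integral_of_le zero_le_one] at h0
  have hconst := (hf.mono (Ioo_subset_Ioo_right (by norm_num))).eqOn_of_ae_eq_comp_add
    (a := 0) (p := 1 / 2) (by simpa using hf.ae_eq_comp_add_half_of_integral_sin_mul_eq_zero hint' h0)
  norm_num at hconst
  exact (ae_restrict_congr_set Ioo_ae_eq_Ico).1 (ae_restrict_of_forall_mem measurableSet_Ioo hconst)

theorem ae_eq_const_of_integral_sin_mul_eq_zero {f : ℝ → ℝ}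
    (hf : MonotoneOn f (Ioo 0 1) ∨ AntitoneOn f (Ioo 0 1)) (hint : IntegrableOn f (Ico 0 1))
    (h0 : ∫ t in Ico 0 1, sin (2 * π * t) * f t = 0) :
    ∃ c, f =ᵐ[volume.restrict (Ico 0 1)] fun _ => c := by
  rcases hf with hmono | hanti
  · have h0' : ∫ t in Ico 0 1, sin (2 * π * t) * -f t = 0 := by
      simp [integral_neg, h0]
    refine ⟨f (1 / 2), ?_⟩
    filter_upwards [hmono.neg.ae_eq_const_of_integral_sin_mul_eq_zero hint.neg h0'] with t ht
    exact neg_inj.1 ht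
  · exact ⟨_, hanti.ae_eq_const_of_integral_sin_mul_eq_zero hint h0⟩

theorem im_integral_cexp_two_pi_I_mul {μ : Measure ℝ} {f : ℝ → ℝ} (hf : Integrable f μ) :
    (∫ t, Complex.exp (2 * π * Complex.I * t) * (f t : ℂ) ∂μ).im
      = ∫ t, sin (2 * π * t) * f t ∂μ := by
  have hint : Integrable (fun t : ℝ => Complex.exp (2 * π * Complex.I * t) * (f t : ℂ)) μ :=
    hf.ofReal.bdd_mul (c := 1) (by fun_prop)
      (ae_of_all _ fun t => by simp [Complex.norm_exp])
  rw [← RCLike.im_to_complex, ← integral_im hint]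
  simp [Complex.exp_im]

theorem charFun_ne_zero_of_monotone_density_general (f : ℝ → ℝ)
    (hf_int : ∫ t in Set.Ico (0 : ℝ) 1, f t = 1)
    (hf_mono : MonotoneOn f (Set.Ico (0 : ℝ) 1) ∨ AntitoneOn f (Set.Ico (0 : ℝ) 1))
    (hf_ncst : ¬ f =ᵐ[volume.restrict (Set.Ico (0 : ℝ) 1)] fun _ => 1) :
    (∫ t in Set.Ico (0 : ℝ) 1,
        Complex.exp (2 * π * Complex.I * t) * (f t : ℂ)) ≠ 0 := by
  intro h
  have hint : IntegrableOn f (Ico 0 1) := Integrable.of_integral_ne_zero (by simp [hf_int])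
  have hsin : ∫ t in Ico 0 1, sin (2 * π * t) * f t = 0 := by
    rw [← im_integral_cexp_two_pi_I_mul hint, h, Complex.zero_im]
  obtain ⟨c, hc⟩ := ae_eq_const_of_integral_sin_mul_eq_zero
    (hf_mono.imp (·.mono Ioo_subset_Ico_self) (·.mono Ioo_subset_Ico_self)) hint hsin
  have hc_one : c = 1 := by simpa [integral_congr_ae hc] using hf_int
  exact hf_ncst (hc_one ▸ hc)

/-- If `X` has a monotone density `f` on `[0,1)` that is not a.e. constant `1`,
then `E(e^{2πiX}) = ∫_{[0,1)} e^{2πix} f(x) dx ≠ 0`. -/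
theorem charFun_ne_zero_of_monotone_density (f : ℝ → ℝ)
    (hf_nonneg : ∀ t ∈ Set.Ico (0 : ℝ) 1, 0 ≤ f t)
    (hf_int : ∫ t in Set.Ico (0 : ℝ) 1, f t = 1)
    (hf_mono : MonotoneOn f (Set.Ico (0 : ℝ) 1) ∨ AntitoneOn f (Set.Ico (0 : ℝ) 1))
    (hf_ncst : ¬ f =ᵐ[volume.restrict (Set.Ico (0 : ℝ) 1)] fun _ => 1) :
    (∫ t in Set.Ico (0 : ℝ) 1,
        Complex.exp (2 * π * Complex.I * t) * (f t : ℂ)) ≠ 0 :=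
  charFun_ne_zero_of_monotone_density_general f hf_int hf_mono hf_ncst
end

section
/- Let k be a positive integer and let X, Y be independent uniform random variables on [0,1). Then for t ∈ [0,1), the density of the random variable {k·X·Y} at t equals Σ_{j=0}^{k-1} (1/k)·ln(k/(j+t)); in particular this density is strictly decreasing in t on (0,1). -/
/-!
Given `X = x`, the product `XY` is uniform on `[0, x)`, with density `1/x`; integrating over `x`
shows that `XY` has density `∫_z^1 dx/x = -log z` on `[0, 1)`. The map `z ↦ {kz}` is `k`-to-one
on `[0, 1)`, its `j`-th branch being inverted by `t ↦ (j + t)/k`, so it sends a density `f` to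
`t ↦ ∑_j f((j + t)/k)/k`. With `f = -log` this is the claimed density, and each of its terms
`log (k/(j + t))` is strictly decreasing in `t`.
-/

open MeasureTheory Real Set
open scoped ENNReal

lemma volume_restrict_Ico_preimage_mul_left {x : ℝ} (hx : 0 < x) (s : Set ℝ) :
    volume.restrict (Ico (0 : ℝ) 1) ((x * ·) ⁻¹' s) =
      ENNReal.ofReal x⁻¹ * volume (s ∩ Ico 0 x) := by
  have : (x * ·) ⁻¹' s ∩ Ico 0 1 = (x * ·) ⁻¹' (s ∩ Ico 0 x) := by
    ext y
    simp [mul_nonneg_iff_of_pos_left hx, mul_lt_iff_lt_one_right hx]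
  rw [Measure.restrict_apply' measurableSet_Ico, this, Real.volume_preimage_mul_left hx.ne',
    abs_of_pos (inv_pos.2 hx)]

lemma setLIntegral_Ico_indicator_Ico_inv {z : ℝ} (hz : z ≠ 0) :
    ∫⁻ x in Ico (0 : ℝ) 1, (Ico 0 x).indicator (fun _ => ENNReal.ofReal x⁻¹) z =
      (Ico 0 1).indicator (fun z => ENNReal.ofReal (-log z)) z := by
  by_cases hz1 : z ∈ Ico 0 1
  swap
  · rw [indicator_of_notMem hz1, setLIntegral_congr_fun measurableSet_Ico (g := fun _ => 0)
      fun x hx => indicator_of_notMem (fun h => hz1 ⟨h.1, h.2.trans hx.2⟩) _, lintegral_zero]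
  have hz0 : 0 < z := lt_of_le_of_ne hz1.1 (Ne.symm hz)
  have hcongr : EqOn (fun x => (Ico 0 x).indicator (fun _ => ENNReal.ofReal x⁻¹) z)
      ((Ioi z).indicator fun x => ENNReal.ofReal x⁻¹) (Ico 0 1) := fun x _ => by
    by_cases h : z < x <;> simp [indicator, h, hz0.le]
  have hset : Ioi z ∩ Ico 0 1 = Ioo z 1 := by
    ext x
    simp only [mem_inter_iff, mem_Ioi, mem_Ico, mem_Ioo]
    exact ⟨fun h => ⟨h.1, h.2.2⟩, fun h => ⟨h.1, hz0.le.trans h.1.le, h.2⟩⟩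
  have hint : IntegrableOn (fun x : ℝ => x⁻¹) (Ioo z 1) :=
    ((continuousOn_inv₀.mono fun x hx => (hz0.trans_le hx.1).ne').integrableOn_Icc).mono_set
      Ioo_subset_Icc_self
  have hzero : 0 ∉ uIcc z 1 := by
    rw [uIcc_of_le hz1.2.le]
    exact fun h => hz0.not_ge h.1
  rw [indicator_of_mem hz1, setLIntegral_congr_fun measurableSet_Ico hcongr,
    lintegral_indicator measurableSet_Ioi, Measure.restrict_restrict measurableSet_Ioi, hset,
    ← ofReal_integral_eq_lintegral_ofReal hint
      ((ae_restrict_mem measurableSet_Ioo).mono fun x hx => inv_nonneg.2 (hz0.trans hx.1).le),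
    ← integral_Ioc_eq_integral_Ioo, ← intervalIntegral.integral_of_le hz1.2.le,
    integral_inv hzero, one_div, log_inv]

theorem map_mul_volume_Ico_prod :
    ((volume.restrict (Ico (0 : ℝ) 1)).prod (volume.restrict (Ico (0 : ℝ) 1))).map
        (fun p => p.1 * p.2) =
      (volume.restrict (Ico (0 : ℝ) 1)).withDensity (fun z => ENNReal.ofReal (-log z)) := by
  set K : ℝ → ℝ → ℝ≥0∞ := fun x => (Ico 0 x).indicator fun _ => ENNReal.ofReal x⁻¹
  have hK : Measurable (Function.uncurry K) :=
    Measurable.ite ((measurableSet_le measurable_const measurable_snd).inter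
      (measurableSet_lt measurable_snd measurable_fst)) (by fun_prop) measurable_const
  have hx : ∀ᵐ x ∂volume.restrict (Ico (0 : ℝ) 1), x ∈ Ioo 0 1 := by
    rw [← Measure.restrict_congr_set Ioo_ae_eq_Ico]
    exact ae_restrict_mem measurableSet_Ioo
  have hmul : Measurable fun p : ℝ × ℝ => p.1 * p.2 := measurable_fst.mul measurable_snd
  ext s hs
  rw [Measure.map_apply hmul hs, Measure.prod_apply (hmul hs),
    ← withDensity_indicator measurableSet_Ico, withDensity_apply _ hs]
  calc ∫⁻ x in Ico 0 1, volume.restrict (Ico 0 1) ((x * ·) ⁻¹' s)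
      = ∫⁻ x in Ico 0 1, ∫⁻ z in s, K x z := by
        refine lintegral_congr_ae (hx.mono fun x hx => ?_)
        dsimp only [K]
        rw [volume_restrict_Ico_preimage_mul_left hx.1, lintegral_indicator_const measurableSet_Ico,
          Measure.restrict_apply measurableSet_Ico, inter_comm]
    _ = ∫⁻ z in s, ∫⁻ x in Ico 0 1, K x z := lintegral_lintegral_swap hK.aemeasurable
    _ = ∫⁻ z in s, (Ico 0 1).indicator (fun z => ENNReal.ofReal (-log z)) z :=
        lintegral_congr_ae ((Measure.ae_ne _ 0).mono fun z hz =>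
          setLIntegral_Ico_indicator_Ico_inv hz)

lemma preimage_fract_mul_inter_Ico {k : ℕ} (hk : 0 < k) (s : Set ℝ) :
    (fun z => Int.fract ((k : ℝ) * z)) ⁻¹' s ∩ Ico 0 1 =
      ⋃ j ∈ Finset.range k, (fun t => ((j : ℝ) + t) / k) '' (s ∩ Ico 0 1) := by
  have hk' : (0 : ℝ) < k := by exact_mod_cast hk
  ext z
  simp only [mem_inter_iff, mem_preimage, mem_Ico, mem_iUnion, mem_image, Finset.mem_range]
  constructor
  · rintro ⟨hs, hz0, hz1⟩
    have hkz : 0 ≤ (k : ℝ) * z := by positivity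
    refine ⟨⌊(k : ℝ) * z⌋₊, (Nat.floor_lt hkz).2 (by nlinarith), Int.fract (k * z),
      ⟨hs, Int.fract_nonneg _, Int.fract_lt_one _⟩, ?_⟩
    rw [← Int.self_sub_floor, ← Int.natCast_floor_eq_floor hkz]
    field_simp
    push_cast
    ring
  · rintro ⟨j, hj, t, ⟨hs, ht0, ht1⟩, rfl⟩
    have hjk : (j : ℝ) + 1 ≤ k := by exact_mod_cast hj
    refine ⟨?_, by positivity, (div_lt_one hk').2 (by linarith)⟩
    rwa [mul_div_cancel₀ _ hk'.ne', Int.fract_natCast_add, Int.fract_eq_self.2 ⟨ht0, ht1⟩]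

lemma pairwiseDisjoint_natCast_add_div_image (k : ℕ) (s : Set ℝ) :
    (↑(Finset.range k) : Set ℕ).PairwiseDisjoint
      fun j => (fun t => ((j : ℝ) + t) / k) '' (s ∩ Ico 0 1) := by
  intro i hi j _ hij
  have hk : (0 : ℝ) < k := by exact_mod_cast Nat.zero_lt_of_lt (Finset.mem_range.1 hi)
  refine Set.disjoint_left.2 ?_
  rintro _ ⟨t, ⟨_, ht0, ht1⟩, rfl⟩ ⟨u, ⟨_, hu0, hu1⟩, h⟩
  have hsum : u + j = t + i := by
    rw [div_left_inj' hk.ne'] at h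
    linarith
  apply hij
  have := congrArg Nat.floor hsum
  rwa [Nat.floor_add_natCast hu0, Nat.floor_add_natCast ht0, Nat.floor_eq_zero.2 hu1,
    Nat.floor_eq_zero.2 ht1, zero_add, zero_add, eq_comm] at this

theorem map_fract_mul_withDensity {k : ℕ} (hk : 0 < k) {f : ℝ → ℝ≥0∞}
    (hf : Measurable f) :
    ((volume.restrict (Ico (0 : ℝ) 1)).withDensity f).map (fun z => Int.fract ((k : ℝ) * z)) =
      (volume.restrict (Ico (0 : ℝ) 1)).withDensity
        (fun t => ∑ j ∈ Finset.range k, f (((j : ℝ) + t) / k) / k) := by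
  have hk' : (0 : ℝ) < k := by exact_mod_cast hk
  have hF : Measurable fun z : ℝ => Int.fract ((k : ℝ) * z) := (measurable_const_mul _).fract
  have hinj (j : ℕ) : Function.Injective fun t : ℝ => ((j : ℝ) + t) / k := fun a b h => by
    simpa [div_left_inj' hk'.ne'] using h
  have hderiv (j : ℕ) (t : ℝ) : HasDerivAt (fun t : ℝ => ((j : ℝ) + t) / k) (1 / k) t := by
    simpa using ((hasDerivAt_id t).const_add (j : ℝ)).div_const (k : ℝ)
  ext s hs
  have hA : MeasurableSet (s ∩ Ico 0 1) := hs.inter measurableSet_Ico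
  rw [Measure.map_apply hF hs, withDensity_apply _ (hF hs), withDensity_apply _ hs,
    Measure.restrict_restrict (hF hs), Measure.restrict_restrict hs,
    preimage_fract_mul_inter_Ico hk, lintegral_biUnion_finset
      (pairwiseDisjoint_natCast_add_div_image k s) (fun j _ => hA.image_of_continuousOn_injOn
        (by fun_prop) (hinj j).injOn),
    lintegral_finsetSum _ (fun j _ => by fun_prop)]
  refine Finset.sum_congr rfl fun j _ => ?_
  rw [lintegral_image_eq_lintegral_abs_deriv_mul hA (fun t _ => (hderiv j t).hasDerivWithinAt)
    (hinj j).injOn]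
  refine lintegral_congr fun t => ?_
  rw [abs_of_pos (by positivity), one_div, ENNReal.ofReal_inv_of_pos hk', ENNReal.ofReal_natCast,
    ENNReal.div_eq_inv_mul]

lemma ofReal_sum_log_div_eq_sum_ofReal_neg_log {k : ℕ} (hk : 0 < k) {t : ℝ}
    (ht : t ∈ Ico (0 : ℝ) 1) :
    ENNReal.ofReal (∑ j ∈ Finset.range k, (1 / (k : ℝ)) * log (k / (j + t))) =
      ∑ j ∈ Finset.range k, ENNReal.ofReal (-log (((j : ℝ) + t) / k)) / k := by
  have hk' : (0 : ℝ) < k := by exact_mod_cast hk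
  have hterm (j : ℕ) : (1 / (k : ℝ)) * log (k / (j + t)) = -log (((j : ℝ) + t) / k) / k := by
    rw [← inv_div ((j : ℝ) + t) k, log_inv]
    ring
  have hnonneg : ∀ j ∈ Finset.range k, 0 ≤ -log (((j : ℝ) + t) / k) := fun j hj => by
    have : (j : ℝ) + 1 ≤ k := by exact_mod_cast Finset.mem_range.1 hj
    exact neg_nonneg.2 (log_nonpos (by positivity [ht.1]) ((div_le_one hk').2 (by linarith [ht.2])))
  simp_rw [hterm]
  rw [ENNReal.ofReal_sum_of_nonneg fun j hj => div_nonneg (hnonneg j hj) hk'.le]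
  refine Finset.sum_congr rfl fun j _ => ?_
  rw [ENNReal.ofReal_div_of_pos hk', ENNReal.ofReal_natCast]

theorem strictAntiOn_sum_log_div {k : ℕ} (hk : 0 < k) :
    StrictAntiOn (fun t : ℝ => ∑ j ∈ Finset.range k, (1 / (k : ℝ)) * log (k / (j + t)))
      (Ioi 0) := by
  intro s hs t _ hst
  refine Finset.sum_lt_sum_of_nonempty (Finset.nonempty_range_iff.2 hk.ne') fun j _ => ?_
  have hk' : (0 : ℝ) < k := by exact_mod_cast hk
  have hjs : (0 : ℝ) < j + s := by positivity [hs.out]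
  exact mul_lt_mul_of_pos_left (log_lt_log (div_pos hk' (by linarith))
    (div_lt_div_of_pos_left hk' hjs (by linarith))) (by positivity)

/-- The law of `{k·X·Y}` for independent uniform `X, Y` on `[0,1)` has density
`t ↦ ∑_{j=0}^{k-1} (1/k)·log(k/(j+t))` with respect to Lebesgue measure on `[0,1)`,
and this density is strictly decreasing on `(0,1)`. -/
theorem density_fract_mul_uniform (k : ℕ) (hk : 0 < k) :
    Measure.map (fun p : ℝ × ℝ => Int.fract ((k : ℝ) * p.1 * p.2))
        ((volume.restrict (Set.Ico (0 : ℝ) 1)).prod (volume.restrict (Set.Ico (0 : ℝ) 1)))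
      = (volume.restrict (Set.Ico (0 : ℝ) 1)).withDensity
          (fun t => ENNReal.ofReal
            (∑ j ∈ Finset.range k, (1 / (k : ℝ)) * Real.log ((k : ℝ) / (j + t))))
    ∧ StrictAntiOn
        (fun t : ℝ => ∑ j ∈ Finset.range k, (1 / (k : ℝ)) * Real.log ((k : ℝ) / (j + t)))
        (Set.Ioo (0 : ℝ) 1) := by
  refine ⟨?_, (strictAntiOn_sum_log_div hk).mono Ioo_subset_Ioi_self⟩
  have hcomp : (fun p : ℝ × ℝ => Int.fract ((k : ℝ) * p.1 * p.2)) =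
      (fun z => Int.fract ((k : ℝ) * z)) ∘ fun p => p.1 * p.2 := by
    funext p
    simp [mul_assoc]
  rw [hcomp, ← Measure.map_map (measurable_const_mul _).fract
    (f := fun p : ℝ × ℝ => p.1 * p.2) (measurable_fst.mul measurable_snd),
    map_mul_volume_Ico_prod, map_fract_mul_withDensity hk (by fun_prop)]
  exact withDensity_congr_ae ((ae_restrict_mem measurableSet_Ico).mono fun t ht =>
    (ofReal_sum_log_div_eq_sum_ofReal_neg_log hk ht).symm)
end
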